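/- Let n ≥ 1, 0 < δ ≤ 1, K ≥ 0, and let g : [−1/2,1/2]^n → ℝ^n satisfy ∥g(z)∥_∞ ≤ δ for all z, ∥g(z) − g(w)∥_∞ ≤ K·∥z − w∥_∞ for all z, w, g(−z) = −g(z) for every z on the boundary of [−1/2,1/2]^n, and g(1/2,…,1/2) = δ·e_1. Let T : [−1,1]^n → [−1/2,1/2]^n truncate each coordinate to [−1/2,1/2], and define h : [−1,1]^n → ℝ^n by: h(x) = (2·min_j x_j − 1)·𝟙 + (2 − 2·min_j x_j)·δ·e_1 if x_i ≥ 1/2 for all i; h(x) = (2·min_j(−x_j) − 1)·(−𝟙) + (2 − 2·min_j(−x_j))·δ·(−e_1) if x_i ≤ −1/2 for all i; and h(x) = g(T(x)) otherwise. Then: (i) h is continuous and takes values in [−1,1]^n; (ii) h(1,…,1) = (1,…,1); (iii) h(−x) = −h(x) for all x on the boundary of [−1,1]^n; (iv) ∥h(x) − h(y)∥_∞ ≤ max{2, K}·∥x − y∥_∞ for all x, y ∈ [−1,1]^n; and (v) for every ε with 0 < ε < δ, any x ∈ [−1,1]^n with ∥h(x)∥_∞ ≤ ε satisfies h(x) =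 g(T(x)). -/

import Mathlib

open Set

/-- `min_j x_j` (as the infimum of the range; for `n ≥ 1` this is the minimum). -/
noncomputable def minCoord (n : ℕ) (x : Fin n → ℝ) : ℝ := sInf (Set.range x)

/-- Coordinatewise truncation `T : [−1,1]^n → [−1/2,1/2]^n`. -/
noncomputable def trunc (n : ℕ) (x : Fin n → ℝ) : Fin n → ℝ :=
  fun i => max (-(1 / 2)) (min (1 / 2) (x i))

open scoped Classical in
/-- The piecewise extension `h` of `g`:
`h(x) = (2·min_j x_j − 1)·𝟙 + (2 − 2·min_j x_j)·δ·e_1` if all `x_i ≥ 1/2`;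
`h(x) = (2·min_j(−x_j) − 1)·(−𝟙) + (2 − 2·min_j(−x_j))·δ·(−e_1)` if all `x_i ≤ −1/2`;
`h(x) = g(T(x))` otherwise. -/
noncomputable def hFun (n : ℕ) (δ : ℝ) (g : (Fin n → ℝ) → Fin n → ℝ)
    (x : Fin n → ℝ) : Fin n → ℝ :=
  if ∀ i, (1 : ℝ) / 2 ≤ x i then
    fun i => (2 * minCoord n x - 1) +
      (2 - 2 * minCoord n x) * δ * (if (i : ℕ) = 0 then 1 else 0)
  else if ∀ i, x i ≤ -(1 / 2 : ℝ) then
    fun i => -((2 * minCoord n (-x) - 1) +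
      (2 - 2 * minCoord n (-x)) * δ * (if (i : ℕ) = 0 then 1 else 0))
  else g (trunc n x)

/-!
Write `m(x) = min_j x_j`. Space splits into the corners `m(x) ≥ 1/2` and `m(-x) ≥ 1/2`, where `h`
is an affine function of `m(x)` (resp. `m(-x)`) with slope of sup norm at most `2`, and the
central region, where `h = g ∘ T` is `K`-Lipschitz. The formulas agree on the interfaces
`m(±x) = 1/2` because `g(1/2,…,1/2) = δ e₁` and `g` is odd on the boundary. Lipschitz bounds glue
across an interface: by the intermediate value theorem the segment from `x` to `y` meets it in a
point `z`, and `‖x - z‖ + ‖z - y‖ = ‖x - y‖`. Hence `h` is `max 2 K`-Lipschitz on all of space.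
On the corners the first coordinate of `h` is `δ + (2t - 1)(1 - δ) ≥ δ`, so `‖h(x)‖ < δ` forces
`x` into the central region.
-/

open scoped NNReal

section SegmentGluing

variable {E F : Type*} [SeminormedAddCommGroup E] [NormedSpace ℝ E] [PseudoMetricSpace F]

theorem LipschitzOnWith.union_of_segment {f : E → F} {K : ℝ≥0} {s t : Set E}
    (hs : LipschitzOnWith K f s) (ht : LipschitzOnWith K f t)
    (hst : ∀ x ∈ s, ∀ y ∈ t, ∃ z ∈ segment ℝ x y, z ∈ s ∩ t) :
    LipschitzOnWith K f (s ∪ t) := by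
  have cross : ∀ x ∈ s, ∀ y ∈ t, dist (f x) (f y) ≤ K * dist x y := by
    intro x hx y hy
    obtain ⟨z, hz, hzs, hzt⟩ := hst x hx y hy
    calc dist (f x) (f y) ≤ dist (f x) (f z) + dist (f z) (f y) := dist_triangle _ _ _
      _ ≤ K * dist x z + K * dist z y :=
        add_le_add (hs.dist_le_mul x hx z hzs) (ht.dist_le_mul z hzt y hy)
      _ = K * dist x y := by rw [← mul_add, dist_add_dist_of_mem_segment hz]
  refine LipschitzOnWith.of_dist_le_mul fun x hx y hy => ?_
  rcases hx with hx | hx <;> rcases hy with hy | hy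
  · exact hs.dist_le_mul x hx y hy
  · exact cross x hx y hy
  · rw [dist_comm, dist_comm x]
    exact cross y hy x hx
  · exact ht.dist_le_mul x hx y hy

theorem exists_mem_segment_eq_of_le_of_le {φ : E → ℝ} (hφ : Continuous φ) {x y : E} {c : ℝ}
    (hx : φ x ≤ c) (hy : c ≤ φ y) : ∃ z ∈ segment ℝ x y, φ z = c :=
  (convex_segment x y).isPreconnected.intermediate_value (left_mem_segment ℝ x y)
    (right_mem_segment ℝ x y) hφ.continuousOn ⟨hx, hy⟩

end SegmentGluing

theorem LipschitzOnWith.congr {α β : Type*} [PseudoEMetricSpace α] [PseudoEMetricSpace β]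
    {K : ℝ≥0} {s : Set α} {f f' : α → β} (hf : LipschitzOnWith K f s) (h : EqOn f f' s) :
    LipschitzOnWith K f' s := fun x hx y hy => by
  rw [← h hx, ← h hy]
  exact hf hx hy

section MinCoord

variable {n : ℕ}

theorem minCoord_le (x : Fin n → ℝ) (i : Fin n) : minCoord n x ≤ x i :=
  csInf_le (finite_range x).bddBelow (mem_range_self i)

variable [NeZero n]

theorem le_minCoord_iff {x : Fin n → ℝ} {a : ℝ} : a ≤ minCoord n x ↔ ∀ i, a ≤ x i :=
  ⟨fun h i => h.trans (minCoord_le x i),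
    fun h => le_csInf (range_nonempty x) (forall_mem_range.2 h)⟩

theorem le_minCoord_neg_iff {x : Fin n → ℝ} {a : ℝ} : a ≤ minCoord n (-x) ↔ ∀ i, x i ≤ -a := by
  simp only [le_minCoord_iff, Pi.neg_apply, le_neg]

theorem minCoord_const (c : ℝ) : minCoord n (fun _ => c) = c := by
  rw [minCoord, range_const, csInf_singleton]

theorem minCoord_neg_le (x : Fin n → ℝ) : minCoord n (-x) ≤ -minCoord n x := by
  have h₁ : -x 0 ≥ minCoord n (-x) := minCoord_le (-x) 0
  linarith [minCoord_le x 0]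

theorem lipschitzWith_minCoord : LipschitzWith 1 (minCoord n) := by
  refine LipschitzWith.of_le_add fun x y => ?_
  rw [← sub_le_iff_le_add, le_minCoord_iff]
  intro i
  have hi : x i - y i ≤ dist x y :=
    (le_abs_self _).trans ((Real.dist_eq _ _).symm.trans_le (dist_le_pi_dist x y i))
  linarith [minCoord_le x i]

end MinCoord

def halfCube (n : ℕ) : Set (Fin n → ℝ) := {z | ∀ i, z i ∈ Icc (-(1:ℝ)/2) (1/2)}

section Trunc

variable {n : ℕ}

theorem trunc_mem_halfCube (x : Fin n → ℝ) : trunc n x ∈ halfCube n := fun _ =>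
  ⟨by rw [neg_div]; exact le_max_left _ _, max_le (by norm_num) (min_le_left _ _)⟩

theorem lipschitzWith_trunc : LipschitzWith 1 (trunc n) := by
  refine LipschitzWith.of_dist_le_mul fun x y => ?_
  rw [NNReal.coe_one, one_mul, dist_pi_le_iff dist_nonneg]
  intro i
  have hclamp : LipschitzWith 1 fun a : ℝ => max (-(1 / 2)) (min (1 / 2) a) :=
    (LipschitzWith.id.const_min _).const_max _
  have hi := hclamp.dist_le_mul (x i) (y i)
  rw [NNReal.coe_one, one_mul] at hi
  exact hi.trans (dist_le_pi_dist x y i)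

theorem trunc_neg (x : Fin n → ℝ) : trunc n (-x) = -trunc n x := by
  funext i
  simp only [trunc, Pi.neg_apply]
  grind

theorem trunc_of_forall_half_le {x : Fin n → ℝ} (hx : ∀ i, 1/2 ≤ x i) :
    trunc n x = fun _ => 1/2 := by
  funext i
  rw [trunc, min_eq_left (hx i), max_eq_right (by norm_num)]

theorem abs_trunc_of_half_le_abs {x : Fin n → ℝ} {i : Fin n} (hx : 1/2 ≤ |x i|) :
    |trunc n x i| = 1/2 := by
  unfold trunc
  rcases le_abs'.1 hx with h | h
  · rw [min_eq_right (by linarith), max_eq_left h, abs_neg, abs_of_pos (by norm_num)]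
  · rw [min_eq_left h, max_eq_right (by norm_num), abs_of_pos (by norm_num)]

end Trunc

/-- The value of `hFun` on the upper corner, as a function of `t = minCoord n x`. -/
noncomputable def cornerPath (n : ℕ) (δ t : ℝ) : Fin n → ℝ :=
  fun i => (2 * t - 1) + (2 - 2 * t) * δ * (if (i : ℕ) = 0 then 1 else 0)

section CornerPath

variable {n : ℕ} {δ : ℝ}

theorem cornerPath_half :
    cornerPath n δ (1/2) = fun i : Fin n => if (i : ℕ) = 0 then δ else 0 := by
  funext i
  simp only [cornerPath]
  split_ifs <;> ring

theorem cornerPath_one : cornerPath n δ 1 = fun _ => 1 := by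
  funext i
  simp only [cornerPath]
  ring

theorem lipschitzWith_cornerPath (hδ0 : 0 ≤ δ) (hδ1 : δ ≤ 1) :
    LipschitzWith 2 (cornerPath n δ) := by
  refine LipschitzWith.of_dist_le_mul fun s t => ?_
  rw [dist_pi_le_iff (by positivity)]
  intro i
  have hdiff : cornerPath n δ s i - cornerPath n δ t i =
      2 * (1 - δ * (if (i : ℕ) = 0 then 1 else 0)) * (s - t) := by
    simp only [cornerPath]; ring
  have hcoef : |1 - δ * (if (i : ℕ) = 0 then 1 else 0)| ≤ 1 := by
    rw [abs_le]; split_ifs <;> constructor <;> linarith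
  rw [Real.dist_eq, Real.dist_eq, hdiff, abs_mul, abs_mul, abs_two, NNReal.coe_ofNat]
  gcongr
  exact mul_le_of_le_one_right zero_le_two hcoef

theorem abs_cornerPath_le_one (hδ0 : 0 ≤ δ) (hδ1 : δ ≤ 1) {t : ℝ} (ht : t ∈ Icc (1/2) 1)
    (i : Fin n) : |cornerPath n δ t i| ≤ 1 := by
  obtain ⟨ht₁, ht₂⟩ := ht
  rw [abs_le]
  simp only [cornerPath]
  split_ifs <;> constructor <;> nlinarith

theorem le_norm_cornerPath [NeZero n] (hδ1 : δ ≤ 1) {t : ℝ} (ht : 1/2 ≤ t) :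
    δ ≤ ‖cornerPath n δ t‖ := by
  have h0 : cornerPath n δ t 0 = δ + (2 * t - 1) * (1 - δ) := by
    simp only [cornerPath, Fin.val_zero, if_true]; ring
  calc δ ≤ cornerPath n δ t 0 := by rw [h0]; nlinarith
    _ ≤ ‖cornerPath n δ t 0‖ := Real.le_norm_self _
    _ ≤ ‖cornerPath n δ t‖ := norm_le_pi_norm _ 0

end CornerPath

def upperCorner (n : ℕ) : Set (Fin n → ℝ) := {x | 1/2 ≤ minCoord n x}

def lowerCorner (n : ℕ) : Set (Fin n → ℝ) := {x | 1/2 ≤ minCoord n (-x)}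

/-- Closed, so that it meets each corner along the interface where `hFun` switches formula. -/
def centralRegion (n : ℕ) : Set (Fin n → ℝ) :=
  {x | minCoord n x ≤ 1/2 ∧ minCoord n (-x) ≤ 1/2}

section Regions

variable {n : ℕ} {x : Fin n → ℝ}

theorem neg_mem_lowerCorner_iff : -x ∈ lowerCorner n ↔ x ∈ upperCorner n := by
  simp only [lowerCorner, upperCorner, mem_ofPred_eq, neg_neg]

theorem neg_mem_centralRegion_iff : -x ∈ centralRegion n ↔ x ∈ centralRegion n := by
  simp only [centralRegion, mem_ofPred_eq, neg_neg, and_comm]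

theorem mem_upperCorner_or_mem_lowerCorner_or_mem_centralRegion (x : Fin n → ℝ) :
    x ∈ upperCorner n ∨ x ∈ lowerCorner n ∨ x ∈ centralRegion n := by
  simp only [upperCorner, centralRegion, lowerCorner, mem_ofPred_eq]
  by_contra! h
  exact lt_asymm (h.2.2 h.1.le) h.2.1

variable [NeZero n]

theorem minCoord_neg_le_of_mem_upperCorner (hx : x ∈ upperCorner n) :
    minCoord n (-x) ≤ -(1/2) :=
  (minCoord_neg_le x).trans (neg_le_neg hx)

theorem minCoord_le_of_mem_lowerCorner (hx : x ∈ lowerCorner n) : minCoord n x ≤ -(1/2) := by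
  simpa only [neg_neg] using minCoord_neg_le_of_mem_upperCorner (x := -x) hx

end Regions

section Extension

variable {n : ℕ} {δ : ℝ} {g : (Fin n → ℝ) → Fin n → ℝ} {x : Fin n → ℝ}

theorem hFun_of_mem_upperCorner [NeZero n] (hx : x ∈ upperCorner n) :
    hFun n δ g x = cornerPath n δ (minCoord n x) := by
  rw [hFun, if_pos (le_minCoord_iff.1 hx)]
  rfl

theorem hFun_of_mem_lowerCorner [NeZero n] (hx : x ∈ lowerCorner n) :
    hFun n δ g x = -cornerPath n δ (minCoord n (-x)) := by
  have hneg : ∀ i, x i ≤ -(1/2 : ℝ) := le_minCoord_neg_iff.1 hx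
  have hpos : ¬ ∀ i, (1:ℝ)/2 ≤ x i := fun h => by linarith [h 0, hneg 0]
  rw [hFun, if_neg hpos, if_pos hneg]
  rfl

theorem hFun_of_notMem_corners [NeZero n] (hu : x ∉ upperCorner n) (hl : x ∉ lowerCorner n) :
    hFun n δ g x = g (trunc n x) := by
  rw [hFun, if_neg (mt le_minCoord_iff.2 hu), if_neg (mt le_minCoord_neg_iff.2 hl)]

theorem eqOn_hFun_centralRegion [NeZero n]
    (hgodd : ∀ z ∈ halfCube n, (∃ i, |z i| = 1/2) → g (-z) = -g z)
    (hgcorner : g (fun _ => 1/2) = fun i : Fin n => if (i : ℕ) = 0 then δ else 0) :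
    EqOn (hFun n δ g) (fun x => g (trunc n x)) (centralRegion n) := by
  rintro x ⟨hx₁, hx₂⟩
  beta_reduce
  rcases hx₁.eq_or_lt with hx₁ | hx₁
  · have hu : x ∈ upperCorner n := hx₁.ge
    rw [hFun_of_mem_upperCorner hu, hx₁, cornerPath_half, ← hgcorner,
      trunc_of_forall_half_le (le_minCoord_iff.1 hu)]
  rcases hx₂.eq_or_lt with hx₂ | hx₂
  · have hl : x ∈ lowerCorner n := hx₂.ge
    have htrunc : trunc n x = -fun _ => 1/2 := by
      rw [← trunc_of_forall_half_le (le_minCoord_iff.1 hl), ← trunc_neg, neg_neg]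
    have hodd := hgodd (fun _ => 1/2) (fun _ => ⟨by norm_num, le_rfl⟩) ⟨0, by norm_num⟩
    rw [hFun_of_mem_lowerCorner hl, hx₂, cornerPath_half, ← hgcorner, htrunc, hodd]
  exact hFun_of_notMem_corners hx₁.not_ge hx₂.not_ge

theorem lipschitzOnWith_hFun_upperCorner [NeZero n] (hδ0 : 0 ≤ δ) (hδ1 : δ ≤ 1) :
    LipschitzOnWith 2 (hFun n δ g) (upperCorner n) := by
  have h := (lipschitzWith_cornerPath (n := n) hδ0 hδ1).comp (lipschitzWith_minCoord (n := n))
  rw [mul_one] at h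
  exact h.lipschitzOnWith.congr fun x hx => (hFun_of_mem_upperCorner hx).symm

theorem lipschitzOnWith_hFun_lowerCorner [NeZero n] (hδ0 : 0 ≤ δ) (hδ1 : δ ≤ 1) :
    LipschitzOnWith 2 (hFun n δ g) (lowerCorner n) := by
  have h := ((lipschitzWith_cornerPath (n := n) hδ0 hδ1).comp
    ((lipschitzWith_minCoord (n := n)).comp LipschitzWith.id.neg)).neg
  rw [mul_one, mul_one] at h
  exact h.lipschitzOnWith.congr fun x hx => (hFun_of_mem_lowerCorner hx).symm

theorem lipschitzOnWith_hFun_centralRegion [NeZero n] {K : ℝ≥0}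
    (hg : LipschitzOnWith K g (halfCube n))
    (hc : EqOn (hFun n δ g) (fun x => g (trunc n x)) (centralRegion n)) :
    LipschitzOnWith K (hFun n δ g) (centralRegion n) := by
  have h := hg.comp (lipschitzWith_trunc.lipschitzOnWith (s := univ))
    fun x _ => trunc_mem_halfCube x
  rw [mul_one] at h
  exact (h.mono (subset_univ _)).congr hc.symm

theorem lipschitzWith_hFun [NeZero n] (hδ0 : 0 ≤ δ) (hδ1 : δ ≤ 1) {K : ℝ≥0}
    (hg : LipschitzOnWith K g (halfCube n))
    (hc : EqOn (hFun n δ g) (fun x => g (trunc n x)) (centralRegion n)) :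
    LipschitzWith (max 2 K) (hFun n δ g) := by
  have hupper := (lipschitzOnWith_hFun_upperCorner (g := g) hδ0 hδ1).weaken (le_max_left 2 K)
  have hlower := (lipschitzOnWith_hFun_lowerCorner (g := g) hδ0 hδ1).weaken (le_max_left 2 K)
  have hcentral :=
    (lipschitzOnWith_hFun_centralRegion hg hc).weaken (le_max_right 2 K)
  have hupper_central := hupper.union_of_segment hcentral fun x hx y hy => by
    obtain ⟨z, hz, hmin⟩ :=
      exists_mem_segment_eq_of_le_of_le lipschitzWith_minCoord.continuous hy.1 hx
    exact ⟨z, segment_symm ℝ y x ▸ hz, hmin.ge, hmin.le,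
      (minCoord_neg_le_of_mem_upperCorner hmin.ge).trans (by norm_num)⟩
  have hall := hupper_central.union_of_segment hlower fun x hx y hy => by
    have hx' : minCoord n (-x) ≤ 1/2 := hx.elim
      (fun hx => (minCoord_neg_le_of_mem_upperCorner hx).trans (by norm_num)) (·.2)
    obtain ⟨z, hz, hmin⟩ := exists_mem_segment_eq_of_le_of_le
      (lipschitzWith_minCoord.continuous.comp continuous_neg) hx' hy
    exact ⟨z, hz, Or.inr ⟨(minCoord_le_of_mem_lowerCorner hmin.ge).trans (by norm_num),
      hmin.le⟩, hmin.ge⟩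
  refine lipschitzOnWith_univ.1 (hall.mono fun x _ => ?_)
  rcases mem_upperCorner_or_mem_lowerCorner_or_mem_centralRegion x with h | h | h
  exacts [Or.inl (Or.inl h), Or.inr h, Or.inl (Or.inr h)]

theorem hFun_one [NeZero n] : hFun n δ g (fun _ => 1) = fun _ => 1 := by
  have h : (fun _ => (1:ℝ)) ∈ upperCorner n := by
    show (1/2 : ℝ) ≤ minCoord n fun _ => 1
    rw [minCoord_const]
    norm_num
  rw [hFun_of_mem_upperCorner h, minCoord_const, cornerPath_one]

theorem abs_hFun_apply_le_one [NeZero n] (hδ0 : 0 ≤ δ) (hδ1 : δ ≤ 1)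
    (hgbound : ∀ z ∈ halfCube n, ‖g z‖ ≤ δ)
    (hc : EqOn (hFun n δ g) (fun x => g (trunc n x)) (centralRegion n))
    (hx : ∀ i, x i ∈ Icc (-1:ℝ) 1) (i : Fin n) : |hFun n δ g x i| ≤ 1 := by
  rcases mem_upperCorner_or_mem_lowerCorner_or_mem_centralRegion x with h | h | h
  · rw [hFun_of_mem_upperCorner h]
    exact abs_cornerPath_le_one hδ0 hδ1 ⟨h, (minCoord_le x 0).trans (hx 0).2⟩ i
  · rw [hFun_of_mem_lowerCorner h, Pi.neg_apply, abs_neg]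
    exact abs_cornerPath_le_one hδ0 hδ1 ⟨h, (minCoord_le (-x) 0).trans (neg_le.2 (hx 0).1)⟩ i
  · rw [hc h]
    calc |g (trunc n x) i| = ‖g (trunc n x) i‖ := (Real.norm_eq_abs _).symm
      _ ≤ ‖g (trunc n x)‖ := norm_le_pi_norm _ i
      _ ≤ δ := hgbound _ (trunc_mem_halfCube x)
      _ ≤ 1 := hδ1

theorem hFun_neg [NeZero n]
    (hgodd : ∀ z ∈ halfCube n, (∃ i, |z i| = 1/2) → g (-z) = -g z)
    (hc : EqOn (hFun n δ g) (fun x => g (trunc n x)) (centralRegion n))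
    (hx : ∃ i, 1/2 ≤ |x i|) : hFun n δ g (-x) = -hFun n δ g x := by
  rcases mem_upperCorner_or_mem_lowerCorner_or_mem_centralRegion x with h | h | h
  · rw [hFun_of_mem_lowerCorner (neg_mem_lowerCorner_iff.2 h), neg_neg,
      hFun_of_mem_upperCorner h]
  · rw [hFun_of_mem_upperCorner (x := -x) h, hFun_of_mem_lowerCorner h,
      neg_neg]
  · obtain ⟨i, hi⟩ := hx
    rw [hc (neg_mem_centralRegion_iff.2 h), hc h]
    beta_reduce
    rw [trunc_neg]
    exact hgodd _ (trunc_mem_halfCube x) ⟨i, abs_trunc_of_half_le_abs hi⟩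

theorem hFun_eq_of_norm_lt [NeZero n] (hδ1 : δ ≤ 1)
    (hc : EqOn (hFun n δ g) (fun x => g (trunc n x)) (centralRegion n))
    (hx : ‖hFun n δ g x‖ < δ) : hFun n δ g x = g (trunc n x) := by
  rcases mem_upperCorner_or_mem_lowerCorner_or_mem_centralRegion x with h | h | h
  · rw [hFun_of_mem_upperCorner h] at hx
    exact absurd (le_norm_cornerPath hδ1 h) hx.not_ge
  · rw [hFun_of_mem_lowerCorner h, norm_neg] at hx
    exact absurd (le_norm_cornerPath hδ1 h) hx.not_ge
  · exact hc h

end Extension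

/-- Properties of the extension `h` of `g : [−1/2,1/2]^n → ℝ^n` (with `‖g‖_∞ ≤ δ`,
`K`-Lipschitz, odd on the boundary of `[−1/2,1/2]^n`, `g(1/2,…,1/2) = δ·e_1`):
(i) `h` is continuous on `[−1,1]^n` and takes values in `[−1,1]^n`; (ii) `h(1,…,1) = (1,…,1)`;
(iii) `h(−x) = −h(x)` on the boundary of `[−1,1]^n`; (iv) `h` is `max{2,K}`-Lipschitz;
(v) for `0 < ε < δ`, any `x` with `‖h(x)‖_∞ ≤ ε` satisfies `h(x) = g(T(x))`. -/
theorem stmt12 (n : ℕ) (hn : 1 ≤ n) (δ K : ℝ) (hδ0 : 0 < δ) (hδ1 : δ ≤ 1) (hK : 0 ≤ K)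
    (g : (Fin n → ℝ) → Fin n → ℝ)
    (hgbound : ∀ z : Fin n → ℝ, (∀ i, z i ∈ Icc (-(1:ℝ)/2) (1/2)) → ‖g z‖ ≤ δ)
    (hglip : ∀ z w : Fin n → ℝ, (∀ i, z i ∈ Icc (-(1:ℝ)/2) (1/2)) →
      (∀ i, w i ∈ Icc (-(1:ℝ)/2) (1/2)) → ‖g z - g w‖ ≤ K * ‖z - w‖)
    (hgodd : ∀ z : Fin n → ℝ, (∀ i, z i ∈ Icc (-(1:ℝ)/2) (1/2)) →
      (∃ i, |z i| = 1/2) → g (-z) = -(g z))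
    (hgcorner : g (fun _ => 1/2) = fun i : Fin n => if (i : ℕ) = 0 then δ else 0) :
    (ContinuousOn (hFun n δ g) {x : Fin n → ℝ | ∀ i, x i ∈ Icc (-1:ℝ) 1} ∧
      ∀ x : Fin n → ℝ, (∀ i, x i ∈ Icc (-1:ℝ) 1) → ∀ i, hFun n δ g x i ∈ Icc (-1:ℝ) 1) ∧
    (hFun n δ g (fun _ => 1) = fun _ => 1) ∧
    (∀ x : Fin n → ℝ, (∀ i, x i ∈ Icc (-1:ℝ) 1) → (∃ i, |x i| = 1) →
      hFun n δ g (-x) = -(hFun n δ g x)) ∧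
    (∀ x y : Fin n → ℝ, (∀ i, x i ∈ Icc (-1:ℝ) 1) → (∀ i, y i ∈ Icc (-1:ℝ) 1) →
      ‖hFun n δ g x - hFun n δ g y‖ ≤ max 2 K * ‖x - y‖) ∧
    (∀ ε : ℝ, 0 < ε → ε < δ → ∀ x : Fin n → ℝ, (∀ i, x i ∈ Icc (-1:ℝ) 1) →
      ‖hFun n δ g x‖ ≤ ε → hFun n δ g x = g (trunc n x)) := by
  have : NeZero n := ⟨by omega⟩
  have hg : LipschitzOnWith K.toNNReal g (halfCube n) :=
    LipschitzOnWith.of_dist_le' fun z hz w hw => by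
      simpa only [dist_eq_norm] using hglip z w hz hw
  have hc := eqOn_hFun_centralRegion hgodd hgcorner
  have hlip := lipschitzWith_hFun hδ0.le hδ1 hg hc
  refine ⟨⟨hlip.continuous.continuousOn, fun x hx i =>
      abs_le.1 (abs_hFun_apply_le_one hδ0.le hδ1 hgbound hc hx i)⟩,
    hFun_one, fun x _ ⟨i, hi⟩ => hFun_neg hgodd hc ⟨i, by rw [hi]; norm_num⟩,
    fun x y _ _ => ?_,
    fun ε _ hεδ x _ hx => hFun_eq_of_norm_lt hδ1 hc (hx.trans_lt hεδ)⟩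
  have hxy := hlip.dist_le_mul x y
  rwa [dist_eq_norm, dist_eq_norm, NNReal.coe_max, NNReal.coe_ofNat,
    Real.coe_toNNReal K hK] at hxy
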